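/- Let M be a connected hypersurface in Euclidean space E^{n+1} (n ≥ 2) such that (M, g, V^T, φ) is a conformal soliton, where V is the position vector field and V^T its tangential component. If the support function λ = ⟨V, N⟩ is nowhere zero on M, then each principal curvature κ_i satisfies κ_i = (φ - 1)/λ; in particular M is totally umbilical. -/

import Mathlib

open scoped RealInnerProductSpace

/-- A set `S` in Euclidean space is a conic submanifold (an open portion of a cone with
vertex at the origin): `S = C ∩ U` for a cone `C` (closed under positive scalings) and an
open set `U`. -/
def IsConicPortion {m : ℕ} (S : Set (EuclideanSpace ℝ (Fin m))) : Prop :=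
  ∃ C U : Set (EuclideanSpace ℝ (Fin m)),
    (∀ x ∈ C, ∀ t : ℝ, 0 < t → t • x ∈ C) ∧ IsOpen U ∧ S = C ∩ U

/-- Induced metric on a parametrized hypersurface `F : Ω ⊆ ℝⁿ → 𝔼^{n+1}`, evaluated on
vector fields in the parametrization. -/
noncomputable def indMetric {n m : ℕ} (F : EuclideanSpace ℝ (Fin n) → EuclideanSpace ℝ (Fin m))
    (X Y : EuclideanSpace ℝ (Fin n) → EuclideanSpace ℝ (Fin n))
    (p : EuclideanSpace ℝ (Fin n)) : ℝ :=
  ⟪fderiv ℝ F p (X p), fderiv ℝ F p (Y p)⟫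

/-- Lie bracket of vector fields in the parametrization. -/
noncomputable def vfBracket {n : ℕ}
    (X Y : EuclideanSpace ℝ (Fin n) → EuclideanSpace ℝ (Fin n))
    (p : EuclideanSpace ℝ (Fin n)) : EuclideanSpace ℝ (Fin n) :=
  fderiv ℝ Y p (X p) - fderiv ℝ X p (Y p)

/-- Lie derivative of the induced metric along `v`:
`(L_v g)(X,Y) = v(g(X,Y)) - g([v,X],Y) - g(X,[v,Y])`. -/
noncomputable def lieDerivMetric {n m : ℕ}
    (F : EuclideanSpace ℝ (Fin n) → EuclideanSpace ℝ (Fin m))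
    (v X Y : EuclideanSpace ℝ (Fin n) → EuclideanSpace ℝ (Fin n))
    (p : EuclideanSpace ℝ (Fin n)) : ℝ :=
  fderiv ℝ (indMetric F X Y) p (v p)
    - indMetric F (vfBracket v X) Y p - indMetric F X (vfBracket v Y) p

/-- `(M, g, V^T, φ)` is a conformal soliton on the hypersurface parametrized by `F` with
unit normal `N`: `vt` represents the tangential component `V^T` of the position vector
field `V` (i.e. `dF(vt) = F - ⟪F,N⟫ N`) and `φ g = (1/2) L_{V^T} g` holds on `Ω` for all
smooth vector fields. -/
def IsConformalSolitonHyp {n : ℕ} (Ω : Set (EuclideanSpace ℝ (Fin n)))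
    (F N : EuclideanSpace ℝ (Fin n) → EuclideanSpace ℝ (Fin (n + 1)))
    (φ : EuclideanSpace ℝ (Fin n) → ℝ)
    (vt : EuclideanSpace ℝ (Fin n) → EuclideanSpace ℝ (Fin n)) : Prop :=
  ContDiffOn ℝ (⊤ : ℕ∞) vt Ω ∧
    (∀ p ∈ Ω, fderiv ℝ F p (vt p) = F p - ⟪F p, N p⟫ • N p) ∧
    ∀ X Y : EuclideanSpace ℝ (Fin n) → EuclideanSpace ℝ (Fin n),
      ContDiffOn ℝ (⊤ : ℕ∞) X Ω → ContDiffOn ℝ (⊤ : ℕ∞) Y Ω →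
      ∀ p ∈ Ω, φ p * indMetric F X Y p = (1 / 2) * lieDerivMetric F vt X Y p

set_option maxHeartbeats 1000000 in
/-- for a conformal soliton `(M, g, V^T, φ)` on a hypersurface of
`𝔼^{n+1}` (`n ≥ 2`) whose support function `λ = ⟪V, N⟫` is nowhere zero, every
principal curvature equals `(φ - 1)/λ`; i.e. the shape operator is `((φ-1)/λ)·Id`
(`dN = -((φ-1)/λ) dF`), so `M` is totally umbilical. -/
theorem soliton_nowhere_zero_support_umbilical {n : ℕ} (hn : 2 ≤ n)
    (Ω : Set (EuclideanSpace ℝ (Fin n))) (hΩ : IsOpen Ω) (hconn : IsPreconnected Ω)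
    (F N : EuclideanSpace ℝ (Fin n) → EuclideanSpace ℝ (Fin (n + 1)))
    (hF : ContDiffOn ℝ (⊤ : ℕ∞) F Ω) (hN : ContDiffOn ℝ (⊤ : ℕ∞) N Ω)
    (himm : ∀ p ∈ Ω, Function.Injective (fderiv ℝ F p))
    (hNunit : ∀ p ∈ Ω, ‖N p‖ = 1)
    (hNperp : ∀ p ∈ Ω, ∀ w, ⟪N p, fderiv ℝ F p w⟫ = 0)
    (φ : EuclideanSpace ℝ (Fin n) → ℝ)
    (vt : EuclideanSpace ℝ (Fin n) → EuclideanSpace ℝ (Fin n))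
    (hsol : IsConformalSolitonHyp Ω F N φ vt)
    (hlam : ∀ p ∈ Ω, ⟪F p, N p⟫ ≠ 0) :
    ∀ p ∈ Ω, ∀ w, fderiv ℝ N p w = -((φ p - 1) / ⟪F p, N p⟫) • fderiv ℝ F p w := by
  obtain ⟨hvt, htang, hsol2⟩ := hsol
  intro p hp w
  have hmem : Ω ∈ nhds p := hΩ.mem_nhds hp
  have hFat : ContDiffAt ℝ (⊤ : ℕ∞) F p := hF.contDiffAt hmem
  have hNat : ContDiffAt ℝ (⊤ : ℕ∞) N p := hN.contDiffAt hmem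
  have hvtat : ContDiffAt ℝ (⊤ : ℕ∞) vt p := hvt.contDiffAt hmem
  set B := fderiv ℝ F p with hB
  set B' := fderiv ℝ (fderiv ℝ F) p with hB'
  have hFd : HasFDerivAt F B p := (hFat.differentiableAt (by simp)).hasFDerivAt
  have hNd : HasFDerivAt N (fderiv ℝ N p) p := (hNat.differentiableAt (by simp)).hasFDerivAt
  have hvtd : HasFDerivAt vt (fderiv ℝ vt p) p := (hvtat.differentiableAt (by simp)).hasFDerivAt
  have hF2 : ContDiffAt ℝ (⊤ : ℕ∞) (fderiv ℝ F) p := hFat.fderiv_right (by simp)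
  have hBd : HasFDerivAt (fderiv ℝ F) B' p := (hF2.differentiableAt (by simp)).hasFDerivAt
  have hsymm : ∀ v u, B' v u = B' u v := fun v u => hFat.isSymmSndFDerivAt (by simp; exact WithTop.coe_le_coe.mpr (le_top : (2:ℕ∞) ≤ ⊤)) v u
  have hgu : ∀ u, HasFDerivAt (fun q => fderiv ℝ F q u) (B'.flip u) p := by
    intro u
    have h := hBd.clm_apply (hasFDerivAt_const u p)
    have h2 : (B.comp (0 : _ →L[ℝ] _) + B'.flip u) = B'.flip u := by ext v; simp
    rwa [h2] at h
  -- key1 : derivative of the perpendicularity relation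
  have key1 : ∀ v u, ⟪fderiv ℝ N p v, B u⟫ + ⟪N p, B' v u⟫ = 0 := by
    intro v u
    have hz : (fun q => ⟪N q, fderiv ℝ F q u⟫) =ᶠ[nhds p] fun _ => (0:ℝ) :=
      Filter.eventually_of_mem hmem fun q hq => hNperp q hq u
    have hd := (hNd.inner ℝ (hgu u)).fderiv
    have h0 : fderiv ℝ (fun q => ⟪N q, fderiv ℝ F q u⟫) p = 0 := by
      rw [hz.fderiv_eq]; exact fderiv_const_apply 0
    rw [h0] at hd
    have h3 := congrArg (fun (T : _ →L[ℝ] ℝ) => T v) hd.symm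
    simp only [ContinuousLinearMap.zero_apply, ContinuousLinearMap.comp_apply,
      ContinuousLinearMap.prod_apply, fderivInnerCLM_apply, ContinuousLinearMap.flip_apply] at h3
    linarith [real_inner_comm (fderiv ℝ N p v) (B u), h3]
  -- key2 : dN w is orthogonal to N
  have key2 : ⟪fderiv ℝ N p w, N p⟫ = 0 := by
    have hz : (fun q => ⟪N q, N q⟫) =ᶠ[nhds p] fun _ => (1:ℝ) := by
      refine Filter.eventually_of_mem hmem fun q hq => ?_
      show ⟪N q, N q⟫ = (1:ℝ)
      rw [real_inner_self_eq_norm_sq, hNunit q hq]; norm_num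
    have hd := (hNd.inner ℝ hNd).fderiv
    have h0 : fderiv ℝ (fun q => ⟪N q, N q⟫) p = 0 := by
      rw [hz.fderiv_eq]; exact fderiv_const_apply 1
    rw [h0] at hd
    have h3 := congrArg (fun (T : _ →L[ℝ] ℝ) => T w) hd.symm
    simp only [ContinuousLinearMap.zero_apply, ContinuousLinearMap.comp_apply,
      ContinuousLinearMap.prod_apply, fderivInnerCLM_apply] at h3
    linarith [real_inner_comm (fderiv ℝ N p w) (N p), h3]
  -- key3 : derivative of the tangency relation
  have key3 : ∀ v, B' v (vt p) + B (fderiv ℝ vt p v)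
      = B v - (⟪F p, fderiv ℝ N p v⟫ + ⟪B v, N p⟫) • N p
        - ⟪F p, N p⟫ • fderiv ℝ N p v := by
    intro v
    have hgvt : HasFDerivAt (fun q => fderiv ℝ F q (vt q))
        (B.comp (fderiv ℝ vt p) + B'.flip (vt p)) p := hBd.clm_apply hvtd
    have hlamd : HasFDerivAt (fun q => ⟪F q, N q⟫)
        ((fderivInnerCLM ℝ (F p, N p)).comp <| B.prod (fderiv ℝ N p)) p := hFd.inner ℝ hNd
    have hrhs := hFd.sub (hlamd.smul hNd)
    have heq : (fun q => fderiv ℝ F q (vt q)) =ᶠ[nhds p]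
        (fun q => F q - ⟪F q, N q⟫ • N q) :=
      Filter.eventually_of_mem hmem fun q hq => htang q hq
    have hfd : fderiv ℝ (fun q => fderiv ℝ F q (vt q)) p
        = fderiv ℝ (fun q => F q - ⟪F q, N q⟫ • N q) p := heq.fderiv_eq
    have h1 := hgvt.fderiv
    have h2 := hrhs.fderiv
    rw [hfd, show (fun q => F q - ⟪F q, N q⟫ • N q) = F - (fun q => ⟪F q, N q⟫) • N from rfl, h2] at h1
    have h3 := congrArg (fun (T : _ →L[ℝ] _) => T v) h1
    simp only [ContinuousLinearMap.add_apply, ContinuousLinearMap.comp_apply,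
      ContinuousLinearMap.flip_apply, ContinuousLinearMap.sub_apply,
      ContinuousLinearMap.smul_apply, ContinuousLinearMap.smulRight_apply,
      ContinuousLinearMap.prod_apply, fderivInnerCLM_apply] at h3
    rw [add_comm (B' v (vt p)), ← h3]
    module
  -- the second fundamental form identity from the soliton equation
  have hlamp : ⟪F p, N p⟫ ≠ 0 := hlam p hp
  have hshape : ∀ u, ⟪fderiv ℝ N p w, B u⟫
      = -((φ p - 1) / ⟪F p, N p⟫) * ⟪B w, B u⟫ := by
    intro u
    -- soliton equation on constant vector fields
    have hsolwu := hsol2 (fun _ => w) (fun _ => u) contDiffOn_const contDiffOn_const p hp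
    -- compute the Lie derivative term
    have hbr : ∀ v : EuclideanSpace ℝ (Fin n),
        vfBracket vt (fun _ => v) p = -(fderiv ℝ vt p v) := by
      intro v; simp [vfBracket]
    have hind : fderiv ℝ (indMetric F (fun _ => w) (fun _ => u)) p (vt p)
        = ⟪B w, B' (vt p) u⟫ + ⟪B' (vt p) w, B u⟫ := by
      have h2 : indMetric F (fun _ => w) (fun _ => u)
          = fun q => ⟪fderiv ℝ F q w, fderiv ℝ F q u⟫ := rfl
      rw [h2, ((hgu w).inner ℝ (hgu u)).fderiv]
      simp [fderivInnerCLM_apply, ContinuousLinearMap.flip_apply]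
      rfl
    have hlie : lieDerivMetric F vt (fun _ => w) (fun _ => u) p
        = ⟪B w, B' (vt p) u⟫ + ⟪B' (vt p) w, B u⟫
          + ⟪B (fderiv ℝ vt p w), B u⟫ + ⟪B w, B (fderiv ℝ vt p u)⟫ := by
      rw [lieDerivMetric, hind]
      simp only [indMetric, hbr, map_neg, inner_neg_left, inner_neg_right]
      ring
    have hindc : indMetric F (fun _ => w) (fun _ => u) p = ⟪B w, B u⟫ := rfl
    rw [hindc, hlie] at hsolwu
    -- rewrite the second-derivative terms using key3 and symmetry
    have hw' : ∀ v, B' (vt p) v = B v - (⟪F p, fderiv ℝ N p v⟫ + ⟪B v, N p⟫) • N p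
        - ⟪F p, N p⟫ • fderiv ℝ N p v - B (fderiv ℝ vt p v) := by
      intro v
      rw [hsymm (vt p) v, eq_sub_iff_add_eq]
      exact key3 v
    have hNBu : ⟪(N p : EuclideanSpace ℝ (Fin (n+1))), B u⟫ = 0 := hNperp p hp u
    have hBwN : ⟪B w, (N p : EuclideanSpace ℝ (Fin (n+1)))⟫ = 0 := by
      rw [real_inner_comm]; exact hNperp p hp w
    have hs1 : ⟪B' (vt p) w, B u⟫ = ⟪B w, B u⟫ - ⟪F p, N p⟫ * ⟪fderiv ℝ N p w, B u⟫
        - ⟪B (fderiv ℝ vt p w), B u⟫ := by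
      rw [hw' w, inner_sub_left, inner_sub_left, inner_sub_left, real_inner_smul_left,
        real_inner_smul_left, hNBu]
      ring
    have hs2 : ⟪B w, B' (vt p) u⟫ = ⟪B w, B u⟫ - ⟪F p, N p⟫ * ⟪B w, fderiv ℝ N p u⟫
        - ⟪B w, B (fderiv ℝ vt p u)⟫ := by
      rw [hw' u, inner_sub_right, inner_sub_right, inner_sub_right, real_inner_smul_right,
        real_inner_smul_right, hBwN]
      ring
    -- symmetry of the second fundamental form
    have hsym2 : ⟪B w, fderiv ℝ N p u⟫ = ⟪fderiv ℝ N p w, B u⟫ := by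
      have h1 := key1 w u
      have h2 := key1 u w
      rw [hsymm u w] at h2
      have := real_inner_comm (B w) (fderiv ℝ N p u)
      linarith
    rw [hs1, hs2, hsym2] at hsolwu
    have h6 : (φ p - 1) * ⟪B w, B u⟫ = -(⟪F p, N p⟫ * ⟪fderiv ℝ N p w, B u⟫) := by linarith
    have h7 : -((φ p - 1) / ⟪F p, N p⟫) * ⟪B w, B u⟫ = ⟪fderiv ℝ N p w, B u⟫ := by
      rw [neg_mul, div_mul_eq_mul_div, ← neg_div, div_eq_iff hlamp]
      linarith
    exact h7.symm
  -- assemble: z := dN w + c • B w is orthogonal to everything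
  set c : ℝ := (φ p - 1) / ⟪F p, N p⟫ with hc
  set z : EuclideanSpace ℝ (Fin (n+1)) := fderiv ℝ N p w + c • B w with hz
  have hz1 : ∀ u, ⟪z, B u⟫ = 0 := by
    intro u
    rw [hz, inner_add_left, real_inner_smul_left, hshape u]
    ring
  have hz2 : ⟪z, N p⟫ = 0 := by
    have hBwN : ⟪B w, (N p : EuclideanSpace ℝ (Fin (n+1)))⟫ = 0 := by
      rw [real_inner_comm]; exact hNperp p hp w
    rw [hz, inner_add_left, real_inner_smul_left, key2, hBwN]
    ring
  -- span argument : z = 0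
  have hzzero : z = 0 := by
    set T : (EuclideanSpace ℝ (Fin n) × ℝ) →ₗ[ℝ] EuclideanSpace ℝ (Fin (n+1)) :=
      (B : EuclideanSpace ℝ (Fin n) →ₗ[ℝ] EuclideanSpace ℝ (Fin (n+1))).coprod
        (LinearMap.toSpanSingleton ℝ _ (N p)) with hT
    have hTapp : ∀ u t, T (u, t) = B u + t • N p := fun u t => rfl
    have hTinj : Function.Injective T := by
      rw [← LinearMap.ker_eq_bot, LinearMap.ker_eq_bot']
      rintro ⟨u, t⟩ h
      rw [hTapp] at h
      have ht : t = 0 := by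
        have h4 := congrArg (fun x => ⟪N p, x⟫) h
        simp only [inner_add_right, hNperp p hp, real_inner_smul_right, inner_zero_right,
          real_inner_self_eq_norm_sq, hNunit p hp] at h4
        have h5 : ⟪N p, B u⟫ = 0 := hNperp p hp u
        simpa [h5] using h4
      have hu : u = 0 := by
        apply himm p hp
        rw [← hB]
        simpa [ht] using h
      simp [ht, hu, Prod.ext_iff]
    have hTsurj : Function.Surjective T := by
      have hfr : Module.finrank ℝ (EuclideanSpace ℝ (Fin n) × ℝ)
          = Module.finrank ℝ (EuclideanSpace ℝ (Fin (n+1))) := by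
        simp [Module.finrank_prod, finrank_euclideanSpace_fin]
      exact (LinearMap.injective_iff_surjective_of_finrank_eq_finrank hfr).mp hTinj
    obtain ⟨⟨u, t⟩, hut⟩ := hTsurj z
    rw [hTapp] at hut
    have h5 : ⟪z, z⟫ = 0 := by
      have h1 : ⟪z, z⟫ = ⟪z, B u + t • N p⟫ := by rw [hut]
      rw [h1, inner_add_right, hz1, real_inner_smul_right, hz2]
      ring
    exact inner_self_eq_zero.mp h5
  have := eq_neg_of_add_eq_zero_left hzzero
  rw [this, neg_smul]
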